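/- arXiv:1209.5088 — 3 statements merged into one kernel-verified Lean document; each statement's English description precedes it below -/
import Mathlib

section
/- Let 0<q<1 and let f be a real function on ℝ_q^+ = {q^n : n ∈ ℤ} such that f(q^n) → 0 as n → ∞ (i.e. f vanishes at 0 along ℝ_q^+). Then the number of sign changes of the q-derivative D_q f on ℝ_q^+ is at least the number of sign changes of f on ℝ_q^+. -/
open Real Filter

noncomputable section

/-- The q-lattice `{q^n : n ∈ ℤ}`. -/
def qLat (q : ℝ) : Set ℝ := {x | ∃ n : ℤ, x = q ^ n}

/-- Jackson q-integral over (0,∞). -/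
def qInt (q : ℝ) (f : ℝ → ℝ) : ℝ := (1 - q) * ∑' n : ℤ, q ^ n * f (q ^ n)

/-- The q-derivative. -/
def qDeriv (q : ℝ) (f : ℝ → ℝ) (x : ℝ) : ℝ := (f x - f (q * x)) / ((1 - q) * x)

/-- Finite q-Pochhammer symbol `(a;p)_n`. -/
def qPoch (a p : ℝ) (n : ℕ) : ℝ := ∏ i ∈ Finset.range n, (1 - a * p ^ i)

/-- Infinite q-Pochhammer symbol `(a;p)_∞`. -/
def qPochInf (a p : ℝ) : ℝ := ∏' i : ℕ, (1 - a * p ^ i)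

/-- Normalized Hahn–Exton q-Bessel function `j_ν(x,q²)`. -/
def jBessel (q ν x : ℝ) : ℝ :=
  ∑' n : ℕ, (-1 : ℝ) ^ n * q ^ (n * (n + 1)) * x ^ (2 * n) /
    (qPoch (q ^ (2 * ν + 2)) (q ^ 2) n * qPoch (q ^ 2) (q ^ 2) n)

/-- Modified q-Bessel function `I_ν(x) = j_ν(ix,q²)`. -/
def iBessel (q ν x : ℝ) : ℝ :=
  ∑' n : ℕ, q ^ (n * (n + 1)) * x ^ (2 * n) /
    (qPoch (q ^ (2 * ν + 2)) (q ^ 2) n * qPoch (q ^ 2) (q ^ 2) n)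

/-- The q-Bessel operator `Δ_{q,ν}`. -/
def qBesselOp (q ν : ℝ) (f : ℝ → ℝ) (x : ℝ) : ℝ :=
  (f (x / q) - (1 + q ^ (2 * ν)) * f x + q ^ (2 * ν) * f (q * x)) / x ^ 2

/-- The constant `c_{q,ν}`. -/
def cqnu (q ν : ℝ) : ℝ :=
  (1 / (1 - q)) * qPochInf (q ^ (2 * ν + 2)) (q ^ 2) / qPochInf (q ^ 2) (q ^ 2)

/-- The q-Bessel Fourier transform `F_{q,ν}`. -/
def qFourier (q ν : ℝ) (f : ℝ → ℝ) (x : ℝ) : ℝ :=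
  cqnu q ν * qInt q (fun t => f t * jBessel q ν (x * t) * t ^ (2 * ν + 1))

/-- The q-Bessel translation operator `T_{q,x}^ν`. -/
def qTrans (q ν : ℝ) (f : ℝ → ℝ) (x y : ℝ) : ℝ :=
  cqnu q ν * qInt q (fun t =>
    qFourier q ν f t * jBessel q ν (y * t) * jBessel q ν (x * t) * t ^ (2 * ν + 1))

/-- The q-convolution product `f *_q g`. -/
def qConv (q ν : ℝ) (f g : ℝ → ℝ) (x : ℝ) : ℝ :=
  cqnu q ν * qInt q (fun y => qTrans q ν f x y * g y * y ^ (2 * ν + 1))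

/-- The q-Macdonald function `K_ν`. -/
def qMacdonald (q ν x : ℝ) : ℝ :=
  cqnu q ν * qInt q (fun t => (1 + t ^ 2)⁻¹ * jBessel q ν (t * x) * t ^ (2 * ν + 1))

/-- The elementary kernel `g_a`. -/
def gKer (q ν a x : ℝ) : ℝ :=
  cqnu q ν * qInt q (fun t => (1 + t ^ 2 / a ^ 2)⁻¹ * jBessel q ν (t * x) * t ^ (2 * ν + 1))

/-- `f` has at least `n` changes of sign on the q-lattice. -/
def HasSignChanges (q : ℝ) (f : ℝ → ℝ) (n : ℕ) : Prop :=
  ∃ t : Fin (n + 1) → ℝ, (∀ i, t i ∈ qLat q) ∧ StrictMono t ∧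
    ∀ i : Fin n, f (t i.castSucc) * f (t i.succ) < 0

/-- `f` is bounded on the q-lattice and has limits at `0` and at `∞` along the lattice. -/
def Admissible (q : ℝ) (f : ℝ → ℝ) : Prop :=
  (∃ M : ℝ, ∀ x ∈ qLat q, |f x| ≤ M) ∧
  (∃ L : ℝ, Tendsto (fun n : ℕ => f (q ^ (n : ℤ))) atTop (nhds L)) ∧
  (∃ L : ℝ, Tendsto (fun n : ℕ => f (q ^ (-n : ℤ))) atTop (nhds L))

/-- `K` is a variation diminishing `*_q`-kernel. -/
def IsVDKernel (q ν : ℝ) (K : ℝ → ℝ) : Prop :=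
  Summable (fun n : ℤ => q ^ n * |K (q ^ n)| * ((q : ℝ) ^ n) ^ (2 * ν + 1)) ∧
  ∀ f : ℝ → ℝ, Admissible q f →
    ∀ m : ℕ, HasSignChanges q (qConv q ν K f) m → HasSignChanges q f m

/-- The q-Wronskian `W_x(u,v)`. -/
def qWronskian (q : ℝ) (u v : ℝ → ℝ) (x : ℝ) : ℝ :=
  (1 / q ^ 2) * (1 - q) ^ 2 * (qDeriv q u (x / q) * v x - qDeriv q v (x / q) * u x)

/-- Sign changes of a sequence along decreasing indices; for `0 < q < 1` these correspond to
sign changes of `f` at the increasing points `q ^ k` of the lattice, with `g k = f (q ^ k)`. -/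
def HasSignChangesSeq (g : ℤ → ℝ) (n : ℕ) : Prop :=
  ∃ m : Fin (n + 1) → ℤ, StrictAnti m ∧ ∀ i : Fin n, g (m i.castSucc) * g (m i.succ) < 0

theorem hasSignChanges_iff_hasSignChangesSeq {q : ℝ} (hq0 : 0 < q) (hq1 : q < 1)
    (f : ℝ → ℝ) (n : ℕ) :
    HasSignChanges q f n ↔ HasSignChangesSeq (fun k => f (q ^ k)) n := by
  have hanti : StrictAnti fun k : ℤ => q ^ k := zpow_right_strictAnti₀ hq0 hq1
  constructor
  · rintro ⟨t, htq, ht, hsign⟩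
    choose m hm using htq
    refine ⟨m, fun i j hij => hanti.lt_iff_gt.1 ?_, fun i => ?_⟩
    · simpa only [← hm] using ht hij
    · simpa only [← hm] using hsign i
  · rintro ⟨m, hm, hsign⟩
    exact ⟨fun i => q ^ m i, fun i => ⟨m i, rfl⟩, hanti.comp hm, hsign⟩

theorem HasSignChangesSeq.div_pos {g w : ℤ → ℝ} {n : ℕ} (hg : HasSignChangesSeq g n)
    (hw : ∀ k, 0 < w k) : HasSignChangesSeq (fun k => g k / w k) n := by
  obtain ⟨m, hm, hsign⟩ := hg
  refine ⟨m, hm, fun i => ?_⟩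
  rw [div_mul_div_comm]
  exact div_neg_of_neg_of_pos (hsign i) (mul_pos (hw _) (hw _))

/-- Discrete mean value theorem. -/
theorem exists_mul_sub_succ_pos_of_mul_sub_pos {g : ℤ → ℝ} {c : ℝ} {a b : ℤ} (hab : a < b)
    (h : 0 < c * (g a - g b)) : ∃ j, a ≤ j ∧ j < b ∧ 0 < c * (g j - g (j + 1)) := by
  induction b, hab using Int.leInduction with
  | base => exact ⟨a, le_rfl, lt_add_one a, h⟩
  | succ b hab ih =>
    have hsplit : c * (g a - g (b + 1)) = c * (g a - g b) + c * (g b - g (b + 1)) := by ring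
    rcases lt_or_ge 0 (c * (g a - g b)) with hpos | hnonpos
    · obtain ⟨j, haj, hjb, hj⟩ := ih hpos
      exact ⟨j, haj, hjb.trans (lt_add_one b), hj⟩
    · exact ⟨b, by omega, lt_add_one b, by linarith⟩

theorem exists_mul_sub_succ_pos_of_tendsto_zero {g : ℤ → ℝ}
    (hg : Tendsto (fun k : ℕ => g k) atTop (nhds 0)) {a : ℤ} (ha : g a ≠ 0) :
    ∃ j, a ≤ j ∧ 0 < g a * (g j - g (j + 1)) := by
  have hlim : Tendsto (fun k : ℕ => g a * (g a - g k)) atTop (nhds (g a * (g a - 0))) :=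
    (tendsto_const_nhds.sub hg).const_mul _
  have hpos : 0 < g a * (g a - 0) := by rw [sub_zero]; exact mul_self_pos.2 ha
  obtain ⟨N, hN⟩ :=
    ((hlim.eventually (lt_mem_nhds hpos)).and (eventually_gt_atTop a.toNat)).exists
  obtain ⟨j, haj, -, hj⟩ := exists_mul_sub_succ_pos_of_mul_sub_pos (by omega) hN.1
  exact ⟨j, haj, hj⟩

/-- Between consecutive sign changes of `g`, and beyond the last one towards `+∞` where `g`
tends to `0`, some backward difference carries the sign of `g`. -/
theorem HasSignChangesSeq.sub_succ {g : ℤ → ℝ} {n : ℕ} (hsc : HasSignChangesSeq g n)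
    (hg : Tendsto (fun k : ℕ => g k) atTop (nhds 0)) :
    HasSignChangesSeq (fun k => g k - g (k + 1)) n := by
  obtain ⟨m, hm, hsign⟩ := hsc
  cases n with
  | zero => exact ⟨m, hm, fun i => i.elim0⟩
  | succ n =>
    obtain ⟨e₀, hle₀, hpos₀⟩ :=
      exists_mul_sub_succ_pos_of_tendsto_zero hg (left_ne_zero_of_mul (hsign 0).ne)
    have hstep : ∀ j : Fin (n + 1), ∃ e, m j.succ ≤ e ∧ e < m j.castSucc ∧
        0 < g (m j.succ) * (g e - g (e + 1)) := fun j =>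
      exists_mul_sub_succ_pos_of_mul_sub_pos (hm j.castSucc_lt_succ)
        (by nlinarith [hsign j, mul_self_nonneg (g (m j.succ))])
    choose e hle hlt hpos using hstep
    set e' : Fin (n + 2) → ℤ := Fin.cons e₀ e with he'
    have hle' : ∀ i, m i ≤ e' i := by
      refine Fin.cases hle₀ fun j => ?_
      simpa only [he', Fin.cons_succ] using hle j
    have hpos' : ∀ i, 0 < g (m i) * (g (e' i) - g (e' i + 1)) := by
      refine Fin.cases hpos₀ fun j => ?_
      simpa only [he', Fin.cons_succ] using hpos j
    refine ⟨e', Fin.strictAnti_iff_succ_lt.2 fun j => ?_, fun j => ?_⟩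
    · simpa only [he', Fin.cons_succ] using (hlt j).trans_le (hle' j.castSucc)
    · nlinarith [hsign j, mul_pos (hpos' j.castSucc) (hpos' j.succ)]

theorem qDeriv_zpow {q : ℝ} (hq : q ≠ 0) (f : ℝ → ℝ) (k : ℤ) :
    qDeriv q f (q ^ k) = (f (q ^ k) - f (q ^ (k + 1))) / ((1 - q) * q ^ k) := by
  rw [qDeriv, zpow_add_one₀ hq, mul_comm q]

theorem sign_changes_qDeriv_of_vanishing_at_zero (q : ℝ) (hq0 : 0 < q) (hq1 : q < 1)
    (f : ℝ → ℝ) (h0 : Tendsto (fun n : ℕ => f (q ^ (n : ℤ))) atTop (nhds 0)) :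
    ∀ n : ℕ, HasSignChanges q f n → HasSignChanges q (qDeriv q f) n := by
  intro n hf
  rw [hasSignChanges_iff_hasSignChangesSeq hq0 hq1] at hf ⊢
  simp only [qDeriv_zpow hq0.ne']
  exact (hf.sub_succ h0).div_pos fun k => mul_pos (sub_pos.2 hq1) (zpow_pos hq0 k)

end
end

section
/- Let 0<q<1 and let h be a real function on ℝ_q^+ and Ω a strictly positive function on ℝ_q^+ such that Ω(x)h(x) → 0 as x → 0⁺ along ℝ_q^+ (or as x → ∞ along ℝ_q^+). Then V[D_q(Ω h)] ≥ V[h]. -/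
open Real Filter

noncomputable section

/-!
Put `F k = Ω(q^{-k}) h(q^{-k})` on `ℤ`; then `D_q(Ω h)(q^{-(k+1)})` is a positive multiple
of the forward difference `F (k + 1) - F k`. Between two consecutive sign changes of `F`,
telescoping (a discrete Rolle theorem) gives a step of `F` with the sign of the later value,
so these steps alternate. Since `F` tends to `0` at one end of `ℤ`, its size must decrease
beyond the first (or last) node, which gives one more step, of the opposite sign.
-/

open scoped fwdDiff Topology

def SignAlternating {n : ℕ} (d : Fin (n + 1) → ℝ) : Prop :=
  ∀ i : Fin n, d i.castSucc * d i.succ < 0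

def HasOrderedSignChanges {α : Type*} [Preorder α] (F : α → ℝ) (n : ℕ) : Prop :=
  ∃ s : Fin (n + 1) → α, StrictMono s ∧ SignAlternating (F ∘ s)

lemma mul_neg_of_mul_pos_of_mul_pos {a b x y : ℝ} (ha : 0 < a * x) (hb : 0 < b * y)
    (hxy : x * y < 0) : a * b < 0 := by
  nlinarith [mul_pos ha hb]

lemma sub_mul_neg_of_abs_lt {a b : ℝ} (h : |b| < |a|) : (b - a) * a < 0 := by
  have hba : b * a < a * a := by
    calc b * a ≤ |b| * |a| := by rw [← abs_mul]; exact le_abs_self _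
      _ < |a| * |a| := mul_lt_mul_of_pos_right h ((abs_nonneg b).trans_lt h)
      _ = a * a := abs_mul_abs_self a
  linarith

namespace SignAlternating

variable {n : ℕ} {d e : Fin (n + 1) → ℝ}

lemma mul_left {w : Fin (n + 1) → ℝ} (hw : ∀ j, 0 < w j) (hd : SignAlternating d) :
    SignAlternating (fun j => w j * d j) := fun i => by
  rw [mul_mul_mul_comm]
  exact mul_neg_of_pos_of_neg (mul_pos (hw _) (hw _)) (hd i)

lemma of_mul_pos (hd : SignAlternating d) (he : ∀ j, 0 < e j * d j) : SignAlternating e :=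
  fun i => mul_neg_of_mul_pos_of_mul_pos (he _) (he _) (hd i)

lemma tail {d : Fin (n + 2) → ℝ} (hd : SignAlternating d) :
    SignAlternating (fun j : Fin (n + 1) => d j.succ) := fun i => by
  dsimp only
  rw [Fin.succ_castSucc]
  exact hd i.succ

lemma cons {x : ℝ} (hx : x * d 0 < 0) (hd : SignAlternating d) :
    SignAlternating (Fin.cons x d : Fin (n + 2) → ℝ) := by
  intro i
  induction i using Fin.cases with
  | zero => simpa using hx
  | succ i => simpa [← Fin.succ_castSucc] using hd i

lemma snoc {x : ℝ} (hd : SignAlternating d) (hx : d (Fin.last n) * x < 0) :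
    SignAlternating (Fin.snoc d x : Fin (n + 2) → ℝ) := by
  intro i
  induction i using Fin.lastCases with
  | last => simpa using hx
  | cast i =>
    rw [Fin.succ_castSucc, Fin.snoc_castSucc, Fin.snoc_castSucc]
    exact hd i

end SignAlternating

namespace HasOrderedSignChanges

variable {α β : Type*} [Preorder α] [Preorder β] {F : α → ℝ} {n : ℕ}

lemma zero [Nonempty α] : HasOrderedSignChanges F 0 :=
  ⟨fun _ => Classical.arbitrary α, Subsingleton.strictMono (α := Fin 1) _, fun i => i.elim0⟩

lemma of_comp {G : β → ℝ} {φ : α → β} (hφ : StrictMono φ)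
    (h : HasOrderedSignChanges (G ∘ φ) n) : HasOrderedSignChanges G n :=
  let ⟨s, hs, hGs⟩ := h
  ⟨φ ∘ s, hφ.comp hs, hGs⟩

lemma mul_left {w : α → ℝ} (hw : ∀ a, 0 < w a) (h : HasOrderedSignChanges F n) :
    HasOrderedSignChanges (fun a => w a * F a) n :=
  let ⟨s, hs, hFs⟩ := h
  ⟨s, hs, hFs.mul_left fun j => hw (s j)⟩

end HasOrderedSignChanges

lemma Fin.strictMono_snoc_of_lt {α : Type*} [Preorder α] {n : ℕ} {f : Fin (n + 1) → α}
    {a : α} (hf : StrictMono f) (ha : f (Fin.last n) < a) :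
    StrictMono (Fin.snoc f a : Fin (n + 2) → α) := by
  refine Fin.strictMono_iff_lt_succ.2 fun j => ?_
  induction j using Fin.lastCases with
  | last => simpa using ha
  | cast j =>
    rw [Fin.succ_castSucc, Fin.snoc_castSucc, Fin.snoc_castSucc]
    exact hf Fin.castSucc_lt_succ

-- `F b - F a` telescopes into the steps `Δ_[1] F k`, `a ≤ k < b`, so one of them has its sign.
lemma exists_fwdDiff_mul_pos {F : ℤ → ℝ} {a b : ℤ} {c : ℝ} (hab : a ≤ b)
    (h : 0 < (F b - F a) * c) : ∃ k, a ≤ k ∧ k < b ∧ 0 < Δ_[1] F k * c := by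
  by_contra! hstep
  have hle : ∀ m, a ≤ m → m ≤ b → (F m - F a) * c ≤ 0 := by
    intro m ham
    induction m, ham using Int.leInduction with
    | base => simp
    | succ m ham ih =>
      intro hmb
      have := hstep m ham (by omega)
      rw [fwdDiff] at this
      nlinarith [ih (by omega)]
  linarith [hle b hab le_rfl]

lemma exists_fwdDiff_between {F : ℤ → ℝ} {m : ℕ} {s : Fin (m + 2) → ℤ}
    (hs : StrictMono s) (hF : SignAlternating (F ∘ s)) :
    ∃ k : Fin (m + 1) → ℤ, (∀ j, s j.castSucc ≤ k j ∧ k j < s j.succ) ∧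
      ∀ j, 0 < Δ_[1] F (k j) * F (s j.succ) := by
  have hk (j : Fin (m + 1)) :
      ∃ k, s j.castSucc ≤ k ∧ k < s j.succ ∧ 0 < Δ_[1] F k * F (s j.succ) := by
    have hsign := hF j
    simp only [Function.comp_apply] at hsign
    exact exists_fwdDiff_mul_pos (hs Fin.castSucc_lt_succ).le
      (by nlinarith [sq_nonneg (F (s j.succ))])
  choose k hk₁ hk₂ hk₃ using hk
  exact ⟨k, fun j => ⟨hk₁ j, hk₂ j⟩, hk₃⟩

theorem HasOrderedSignChanges.fwdDiff_of_tendsto {F : ℤ → ℝ} {n : ℕ}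
    (hF : HasOrderedSignChanges F n)
    (hlim : Tendsto F atBot (𝓝 0) ∨ Tendsto F atTop (𝓝 0)) :
    HasOrderedSignChanges (Δ_[1] F) n := by
  rcases n with _ | m
  · exact .zero
  obtain ⟨s, hs, hFs⟩ := hF
  obtain ⟨k, hks, hkF⟩ := exists_fwdDiff_between hs hFs
  have hk : StrictMono k := Fin.strictMono_iff_lt_succ.2 fun j =>
    calc k j.castSucc < s j.castSucc.succ := (hks _).2
      _ = s j.succ.castSucc := by rw [Fin.succ_castSucc]
      _ ≤ k j.succ := (hks _).1
  have hΔk : SignAlternating (Δ_[1] F ∘ k) := hFs.tail.of_mul_pos hkF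
  rcases hlim with hbot | htop
  · have hne : F (s 0) ≠ 0 := left_ne_zero_of_mul (hFs 0).ne
    obtain ⟨N, hN, hFN⟩ := ((eventually_lt_atBot (s 0)).and
      (hbot.abs.eventually (gt_mem_nhds (by rwa [abs_zero, abs_pos])))).exists
    obtain ⟨k₀, -, hk₀, hk₀F⟩ := exists_fwdDiff_mul_pos (c := F (s 0)) hN.le
      (by nlinarith [sub_mul_neg_of_abs_lt hFN])
    refine ⟨Fin.cons k₀ k, Fin.strictMono_cons.2 ⟨fun j => ?_, hk⟩, ?_⟩
    · exact hk₀.trans_le ((hs.monotone (Fin.zero_le _)).trans (hks j).1)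
    · rw [Fin.comp_cons]
      exact hΔk.cons (mul_neg_of_mul_pos_of_mul_pos hk₀F (hkF 0) (hFs 0))
  · have hne : F (s (Fin.last _)) ≠ 0 := right_ne_zero_of_mul (hFs (Fin.last _)).ne
    obtain ⟨N, hN, hFN⟩ := ((eventually_gt_atTop (s (Fin.last _))).and
      (htop.abs.eventually (gt_mem_nhds (by rwa [abs_zero, abs_pos])))).exists
    obtain ⟨k₁, hk₁, -, hk₁F⟩ := exists_fwdDiff_mul_pos (c := -F (s (Fin.last _))) hN.le
      (by nlinarith [sub_mul_neg_of_abs_lt hFN])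
    refine ⟨Fin.snoc k k₁, Fin.strictMono_snoc_of_lt hk ?_, ?_⟩
    · calc k (Fin.last m) < s (Fin.last m).succ := (hks _).2
        _ = s (Fin.last (m + 1)) := by rw [Fin.succ_last]
        _ ≤ k₁ := hk₁
    · have hklast := hkF (Fin.last m)
      rw [Fin.succ_last] at hklast
      rw [Fin.comp_snoc]
      exact hΔk.snoc (mul_neg_of_mul_pos_of_mul_pos hklast hk₁F
        (by nlinarith [mul_self_pos.2 hne]))

section qLattice

variable {q : ℝ}

lemma strictMono_zpow_neg (hq0 : 0 < q) (hq1 : q < 1) : StrictMono fun k : ℤ => q ^ (-k) :=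
  (zpow_right_strictAnti₀ hq0 hq1).comp fun _ _ => neg_lt_neg

lemma hasSignChanges_iff_zpow_neg (hq0 : 0 < q) (hq1 : q < 1) {f : ℝ → ℝ} {n : ℕ} :
    HasSignChanges q f n ↔ HasOrderedSignChanges (fun k : ℤ => f (q ^ (-k))) n := by
  have hφ := strictMono_zpow_neg hq0 hq1
  constructor
  · rintro ⟨t, ht, htm, hft⟩
    choose e he using ht
    refine ⟨fun i => -e i, fun i j hij => hφ.lt_iff_lt.1 ?_, ?_⟩
    · simpa [← he] using htm hij
    · exact fun i => by simpa [← he] using hft i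
  · rintro ⟨s, hs, hfs⟩
    exact ⟨fun i => q ^ (-s i), fun i => ⟨-s i, rfl⟩, hφ.comp hs, hfs⟩

lemma qDeriv_zpow_neg_succ (hq0 : q ≠ 0) (g : ℝ → ℝ) (k : ℤ) :
    qDeriv q g (q ^ (-(k + 1))) =
      ((1 - q) * q ^ (-(k + 1)))⁻¹ * Δ_[1] (fun k : ℤ => g (q ^ (-k))) k := by
  have hshift : q * q ^ (-(k + 1)) = q ^ (-k) := by
    rw [← zpow_one_add₀ hq0]
    ring_nf
  rw [qDeriv, fwdDiff, hshift, div_eq_inv_mul]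

end qLattice

theorem sign_changes_qDeriv_weighted (q : ℝ) (hq0 : 0 < q) (hq1 : q < 1)
    (h Ω : ℝ → ℝ) (hΩ : ∀ x ∈ qLat q, 0 < Ω x)
    (hlim : Tendsto (fun n : ℕ => Ω (q ^ (n : ℤ)) * h (q ^ (n : ℤ))) atTop (nhds 0) ∨
            Tendsto (fun n : ℕ => Ω (q ^ (-n : ℤ)) * h (q ^ (-n : ℤ))) atTop (nhds 0)) :
    ∀ n : ℕ, HasSignChanges q h n → HasSignChanges q (qDeriv q (fun x => Ω x * h x)) n := by
  intro n hn
  set F : ℤ → ℝ := fun k => Ω (q ^ (-k)) * h (q ^ (-k))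
  have hF : HasOrderedSignChanges F n :=
    ((hasSignChanges_iff_zpow_neg hq0 hq1).1 hn).mul_left fun k => hΩ _ ⟨-k, rfl⟩
  have hFlim : Tendsto F atBot (𝓝 0) ∨ Tendsto F atTop (𝓝 0) := by
    refine hlim.imp (fun h0 => ?_) (fun h0 => ?_)
    · rw [← map_neg_atTop, ← Nat.map_cast_int_atTop, Filter.map_map, tendsto_map'_iff]
      simpa [F, Function.comp_def] using h0
    · rw [← Nat.map_cast_int_atTop, tendsto_map'_iff]
      simpa [F, Function.comp_def] using h0
  rw [hasSignChanges_iff_zpow_neg hq0 hq1]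
  refine .of_comp (φ := fun k : ℤ => k + 1) (strictMono_id.add_const 1) ?_
  have hq1' : 0 < 1 - q := sub_pos.2 hq1
  convert (hF.fwdDiff_of_tendsto hFlim).mul_left
    (w := fun k => ((1 - q) * q ^ (-(k + 1)))⁻¹) fun k => by positivity using 1
  ext k
  exact qDeriv_zpow_neg_succ hq0.ne' (fun x => Ω x * h x) k

end
end

section
/- For 0<q<1 and ν>-1, Δ_{q,ν}^n applied to the monomial t^{2n} and evaluated consistently gives Δ_{q,ν}^n[t ↦ t^{2n}] = ϱ_n (a constant function), where ϱ_n = ∏_{i=1}^n [q^{-2i} - (1+q^{2ν}) + q^{2ν+2i}]; more precisely Δ_{q,ν}[t ↦ t^{2k}](t) = [q^{-2k} - (1+q^{2ν}) + q^{2ν+2k}] t^{2k-2} for each k ≥ 1, and iterating n times starting from t^{2n} yields the constant ϱ_n. -/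
open Real Filter

noncomputable section

/-! On the stencil `t/q, t, qt` the monomial `t^(2k)` takes the values `q^(-2k) t^(2k)`, `t^(2k)`,
`q^(2k) t^(2k)`, so `Δ_{q,ν}` sends it to a multiple of `t^(2k-2)`. Since `Δ_{q,ν}` is homogeneous,
each of the `n` applications to `t^(2n)` lowers the degree by two and contributes one bracket of `ϱ_n`.
At `t = 0` the operator divides by zero, so these identities only hold on `{0}ᶜ`; iterating them is
still possible because `Δ_{q,ν} f` at `t ≠ 0` only reads `f` at the nonzero points `t/q, t, qt`. -/

def qBesselMonomialFactor (q ν : ℝ) (k : ℕ) : ℝ :=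
  (q ^ (2 * k))⁻¹ - (1 + q ^ (2 * ν)) + q ^ (2 * ν) * q ^ (2 * k)

section

open Set

variable {q : ℝ} (ν : ℝ)

lemma qBesselOp_smul (c : ℝ) (f : ℝ → ℝ) :
    qBesselOp q ν (c • f) = c • qBesselOp q ν f := by
  funext t
  simp only [qBesselOp, Pi.smul_apply, smul_eq_mul]
  ring

lemma iterate_qBesselOp_smul (n : ℕ) (c : ℝ) (f : ℝ → ℝ) :
    (qBesselOp q ν)^[n] (c • f) = c • (qBesselOp q ν)^[n] f :=
  (Function.Commute.iterate_left (g := (c • ·)) (qBesselOp_smul ν c) n) f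

lemma eqOn_qBesselOp (hq : q ≠ 0) {f g : ℝ → ℝ} (hfg : EqOn f g {0}ᶜ) :
    EqOn (qBesselOp q ν f) (qBesselOp q ν g) {0}ᶜ := by
  intro t ht
  have ht : t ≠ 0 := ht
  simp only [qBesselOp]
  rw [hfg (div_ne_zero ht hq), hfg ht, hfg (mul_ne_zero hq ht)]

lemma eqOn_iterate_qBesselOp (hq : q ≠ 0) (n : ℕ) {f g : ℝ → ℝ} (hfg : EqOn f g {0}ᶜ) :
    EqOn ((qBesselOp q ν)^[n] f) ((qBesselOp q ν)^[n] g) {0}ᶜ := by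
  induction n with
  | zero => exact hfg
  | succ n ih =>
    simp only [Function.iterate_succ_apply']
    exact eqOn_qBesselOp ν hq ih

lemma qBesselOp_even_pow (hq : q ≠ 0) (k : ℕ) :
    EqOn (qBesselOp q ν (fun s => s ^ (2 * (k + 1))))
      (qBesselMonomialFactor q ν (k + 1) • fun s => s ^ (2 * k)) {0}ᶜ := by
  intro t ht
  have ht : t ≠ 0 := ht
  simp only [qBesselOp, qBesselMonomialFactor, Pi.smul_apply, smul_eq_mul, div_pow, mul_pow]
  field_simp
  ring

lemma iterate_qBesselOp_even_pow (hq : q ≠ 0) (n : ℕ) :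
    EqOn ((qBesselOp q ν)^[n] (fun s => s ^ (2 * n)))
      (fun _ => ∏ i ∈ Finset.Icc 1 n, qBesselMonomialFactor q ν i) {0}ᶜ := by
  induction n with
  | zero => intro t _; simp
  | succ n ih =>
    intro t ht
    rw [Function.iterate_succ_apply,
      eqOn_iterate_qBesselOp ν hq n (qBesselOp_even_pow ν hq n) ht,
      iterate_qBesselOp_smul, Pi.smul_apply, ih ht, smul_eq_mul,
      Finset.prod_Icc_succ_top (by omega)]
    ring

end

theorem qBesselOp_monomial_general (q ν : ℝ) (hq0 : 0 < q) (n : ℕ) :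
    (∀ k : ℕ, 1 ≤ k → ∀ t : ℝ, t ≠ 0 →
      qBesselOp q ν (fun s => s ^ (2 * k)) t =
        (((q : ℝ) ^ (2 * k))⁻¹ - (1 + q ^ (2 * ν)) + q ^ (2 * ν) * q ^ (2 * k)) *
          t ^ (2 * k - 2)) ∧
    (∀ t : ℝ, t ≠ 0 →
      (qBesselOp q ν)^[n] (fun s => s ^ (2 * n)) t =
        ∏ i ∈ Finset.Icc 1 n,
          (((q : ℝ) ^ (2 * i))⁻¹ - (1 + q ^ (2 * ν)) + q ^ (2 * ν) * q ^ (2 * i))) := by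
  refine ⟨fun k hk t ht => ?_, fun t ht => iterate_qBesselOp_even_pow ν hq0.ne' n ht⟩
  obtain ⟨k, rfl⟩ := Nat.exists_eq_add_of_le' hk
  rw [show 2 * (k + 1) - 2 = 2 * k by omega]
  exact qBesselOp_even_pow ν hq0.ne' k ht

theorem qBesselOp_monomial (q ν : ℝ) (hq0 : 0 < q) (hq1 : q < 1) (hν : -1 < ν) (n : ℕ) :
    (∀ k : ℕ, 1 ≤ k → ∀ t : ℝ, t ≠ 0 →
      qBesselOp q ν (fun s => s ^ (2 * k)) t =
        (((q : ℝ) ^ (2 * k))⁻¹ - (1 + q ^ (2 * ν)) + q ^ (2 * ν) * q ^ (2 * k)) *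
          t ^ (2 * k - 2)) ∧
    (∀ t : ℝ, t ≠ 0 →
      (qBesselOp q ν)^[n] (fun s => s ^ (2 * n)) t =
        ∏ i ∈ Finset.Icc 1 n,
          (((q : ℝ) ^ (2 * i))⁻¹ - (1 + q ^ (2 * ν)) + q ^ (2 * ν) * q ^ (2 * i))) :=
  qBesselOp_monomial_general q ν hq0 n

end
end
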